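/- Let λ = (5 − 2√2)/4. Then λ < 1 and for every 2×2 complex matrix B, (1/2)‖B(3) − I_2 ⊗ B(2)‖_2^2 ≤ λ ‖B(2) − I_2 ⊗ B‖_2^2. -/

import Mathlib

open Matrix
open scoped Kronecker

noncomputable section

/-- Cast a square matrix along an equality of sizes. -/
def mcast {m n : ℕ} (h : m = n) (A : Matrix (Fin m) (Fin m) ℂ) :
    Matrix (Fin n) (Fin n) ℂ :=
  Matrix.reindex (finCongr h) (finCongr h) A

/-- `A ⊗ I₂` in the paper's convention, i.e. the block-diagonal matrix `diag(A, A)`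
(used for the recursion `W_{n+1} = Wₙ ⊗ I₂ = diag(Wₙ, Wₙ)`). -/
def blockDup {m : ℕ} (A : Matrix (Fin m) (Fin m) ℂ) :
    Matrix (Fin (2 * m)) (Fin (2 * m)) ℂ :=
  Matrix.reindex finProdFinEquiv finProdFinEquiv
    ((1 : Matrix (Fin 2) (Fin 2) ℂ) ⊗ₖ A)

/-- `I₂ ⊗ A` in the paper's convention: each entry `a_{ij}` is placed at the (1-based)
positions `(2i−1, 2j−1)` and `(2i, 2j)`.  This is the coherent embedding
`φ(A) = I₂ ⊗ A` of the paper, for which `e_{ij} ↦ e_{2i−1,2j−1} + e_{2i,2j}`. -/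
def entryDup {m : ℕ} (A : Matrix (Fin m) (Fin m) ℂ) :
    Matrix (Fin (m * 2)) (Fin (m * 2)) ℂ :=
  Matrix.reindex finProdFinEquiv finProdFinEquiv
    (A ⊗ₖ (1 : Matrix (Fin 2) (Fin 2) ℂ))

/-- The 4 × 4 matrix `W₁`. -/
def W1 : Matrix (Fin 4) (Fin 4) ℂ :=
  !![1, 0, 0, 0;
     0, (Real.sqrt 2 : ℂ)⁻¹, -(Real.sqrt 2 : ℂ)⁻¹, 0;
     0, (Real.sqrt 2 : ℂ)⁻¹, (Real.sqrt 2 : ℂ)⁻¹, 0;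
     0, 0, 0, 1]

/-- The sequence `Wₙ ∈ M_{2^{n+1}}(ℂ)`, with `W_{n+1} = Wₙ ⊗ I₂ = diag(Wₙ, Wₙ)`.
(The value at `0` is irrelevant; all statements only involve `n ≥ 1`.) -/
def Wmat : (n : ℕ) → Matrix (Fin (2 ^ (n + 1))) (Fin (2 ^ (n + 1))) ℂ
  | 0 => 1
  | 1 => mcast (by norm_num) W1
  | (n + 2) => mcast (by ring) (blockDup (Wmat (n + 1)))

/-- `iterA k A n` is the matrix `A(n+1) ∈ M_{2^{k+n}}(ℂ)` of the paper:
`A(1) = A`, `A(n+1) = W_{k+n-1} (I₂ ⊗ A(n)) W_{k+n-1}^*`. -/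
def iterA (k : ℕ) (A : Matrix (Fin (2 ^ k)) (Fin (2 ^ k)) ℂ) :
    (n : ℕ) → Matrix (Fin (2 ^ (k + n))) (Fin (2 ^ (k + n))) ℂ
  | 0 => A
  | (n + 1) => Wmat (k + n) * mcast (by ring) (entryDup (iterA k A n)) * (Wmat (k + n))ᴴ

/-- Squared Frobenius (Hilbert–Schmidt) norm. -/
def frobSq {m n : ℕ} (A : Matrix (Fin m) (Fin n) ℂ) : ℝ :=
  ∑ i, ∑ j, ‖A i j‖ ^ 2

/-- `diffA k A n = A(n+2) - I₂ ⊗ A(n+1)` in the paper's numbering. -/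
def diffA (k : ℕ) (A : Matrix (Fin (2 ^ k)) (Fin (2 ^ k)) ℂ) (n : ℕ) :
    Matrix (Fin (2 ^ (k + n + 1))) (Fin (2 ^ (k + n + 1))) ℂ :=
  iterA k A (n + 1) - mcast (by ring) (entryDup (iterA k A n))

/-- The diagonal compression `E_{D(m)}`. -/
def diagComp {m : ℕ} (A : Matrix (Fin m) (Fin m) ℂ) : Matrix (Fin m) (Fin m) ℂ :=
  Matrix.diagonal (fun i => A i i)

/-!
Write `B = !![a, b; c, d]`. The unitaries `Wₙ` fix the scalar part of `B`, so both differences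
depend only on `b`, `c` and `e = a - d`, and an explicit computation gives
`‖B(2) − I₂ ⊗ B‖₂² = (4 − 2√2)(|b|² + |c|²) + |e|²` and
`‖B(3) − I₂ ⊗ B(2)‖₂² = (4 − 2√2)(|b|² + |c|²) + (5/2 − √2)|e|²`.
Halving the second, the `|e|²` terms match exactly and the off-diagonal ones fall short by
`(2 − √2)(3 − 2√2)(|b|² + |c|²)/2 ≥ 0`.
-/

open Real

lemma mcast_apply {m n : ℕ} (h : m = n) (A : Matrix (Fin m) (Fin m) ℂ) (i j : Fin n) :
    mcast h A i j = A ⟨i, h ▸ i.2⟩ ⟨j, h ▸ j.2⟩ := rfl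

lemma entryDup_apply {m : ℕ} (A : Matrix (Fin m) (Fin m) ℂ) (i j : Fin (m * 2)) :
    entryDup A i j =
      if (i : ℕ) % 2 = j % 2 then A ⟨i / 2, by omega⟩ ⟨j / 2, by omega⟩ else 0 := by
  simp only [entryDup, reindex_apply, submatrix_apply, kroneckerMap_apply, one_apply,
    finProdFinEquiv_symm_apply, Fin.ext_iff, Fin.coe_modNat, mul_ite, mul_one, mul_zero]
  rfl

lemma blockDup_apply {m : ℕ} (A : Matrix (Fin m) (Fin m) ℂ) (i j : Fin (2 * m)) :
    blockDup A i j =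
      if (i : ℕ) / m = j / m then
        A ⟨i % m, Nat.mod_lt _ (by have := i.2; omega)⟩
          ⟨j % m, Nat.mod_lt _ (by have := i.2; omega)⟩
      else 0 := by
  simp only [blockDup, reindex_apply, submatrix_apply, kroneckerMap_apply, one_apply,
    finProdFinEquiv_symm_apply, Fin.ext_iff, Fin.coe_divNat, ite_mul, one_mul, zero_mul]
  rfl

lemma frobSq_mcast {m n : ℕ} (h : m = n) (A : Matrix (Fin m) (Fin m) ℂ) :
    frobSq (mcast h A) = frobSq A := by
  subst h
  rfl

lemma ofReal_sqrt_two_sq : ((√2 : ℝ) : ℂ) ^ 2 = 2 := by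
  norm_cast
  exact sq_sqrt zero_le_two

def iterTwoMat (a b c d : ℂ) : Matrix (Fin 4) (Fin 4) ℂ :=
  !![a, -b / √2, b / √2, 0;
     -c / √2, (a + d) / 2, (a - d) / 2, b / √2;
     c / √2, (a - d) / 2, (a + d) / 2, b / √2;
     0, c / √2, c / √2, d]

def diffZeroMat (b c e : ℂ) : Matrix (Fin 4) (Fin 4) ℂ :=
  !![0, -b / √2, (√2 / 2 - 1 : ℝ) • b, 0;
     -c / √2, -e / 2, e / 2, (√2 / 2 - 1 : ℝ) • b;
     (√2 / 2 - 1 : ℝ) • c, e / 2, e / 2, b / √2;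
     0, (√2 / 2 - 1 : ℝ) • c, c / √2, 0]

def diffOneMat (b c e : ℂ) : Matrix (Fin 8) (Fin 8) ℂ :=
  !![0, b / 2, ((√2 - 1) / 2 : ℝ) • b, 0, 0, 0, 0, 0;
     c / 2, -e / 4, e / 4, ((√2 - 1) / 2 : ℝ) • b, (-(√2 / 4) : ℝ) • e, 0, 0, 0;
     ((√2 - 1) / 2 : ℝ) • c, e / 4, e / 4, -b / 2, ((√2 - 2) / 4 : ℝ) • e, 0, 0, 0;
     0, ((√2 - 1) / 2 : ℝ) • c, -c / 2, 0, 0, ((√2 - 2) / 4 : ℝ) • e, (√2 / 4 : ℝ) • e, 0;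
     0, (-(√2 / 4) : ℝ) • e, ((√2 - 2) / 4 : ℝ) • e, 0, 0, -b / 2, ((1 - √2) / 2 : ℝ) • b, 0;
     0, 0, 0, ((√2 - 2) / 4 : ℝ) • e, -c / 2, -e / 4, e / 4, ((1 - √2) / 2 : ℝ) • b;
     0, 0, 0, (√2 / 4 : ℝ) • e, ((1 - √2) / 2 : ℝ) • c, e / 4, e / 4, b / 2;
     0, 0, 0, 0, 0, ((1 - √2) / 2 : ℝ) • c, c / 2, 0]

lemma iterA_one_one_eq (B : Matrix (Fin 2) (Fin 2) ℂ) :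
    iterA 1 (mcast (by norm_num) B) 1 =
      mcast (by norm_num) (iterTwoMat (B 0 0) (B 0 1) (B 1 0) (B 1 1)) := by
  ext i j
  fin_cases i <;> fin_cases j <;>
    simp [iterA, Wmat, W1, iterTwoMat, mul_apply, Fin.sum_univ_four, mcast_apply,
      entryDup_apply] <;>
    grind [ofReal_sqrt_two_sq]

lemma diffA_one_zero_eq (B : Matrix (Fin 2) (Fin 2) ℂ) :
    diffA 1 (mcast (by norm_num) B) 0 =
      mcast (by norm_num) (diffZeroMat (B 0 1) (B 1 0) (B 0 0 - B 1 1)) := by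
  rw [diffA, iterA_one_one_eq]
  ext i j
  fin_cases i <;> fin_cases j <;>
    simp [iterA, iterTwoMat, diffZeroMat, mcast_apply, entryDup_apply, Complex.real_smul] <;>
    grind [ofReal_sqrt_two_sq]

set_option maxHeartbeats 4000000 in
lemma diffA_one_one_eq (B : Matrix (Fin 2) (Fin 2) ℂ) :
    diffA 1 (mcast (by norm_num) B) 1 =
      mcast (by norm_num) (diffOneMat (B 0 1) (B 1 0) (B 0 0 - B 1 1)) := by
  rw [diffA, iterA, iterA_one_one_eq]
  ext i j
  fin_cases i <;> fin_cases j <;>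
    simp [Wmat, W1, iterTwoMat, diffOneMat, mul_apply, Fin.sum_univ_eight, mcast_apply,
      entryDup_apply, blockDup_apply, Complex.real_smul] <;>
    grind [ofReal_sqrt_two_sq]

lemma frobSq_diffZeroMat (b c e : ℂ) :
    frobSq (diffZeroMat b c e) = (4 - 2 * √2) * (‖b‖ ^ 2 + ‖c‖ ^ 2) + ‖e‖ ^ 2 := by
  simp only [frobSq, diffZeroMat, of_apply, cons_val', cons_val_fin_one, Fin.sum_univ_four,
    Fin.isValue, cons_val_zero, cons_val_one, cons_val, norm_zero, ne_eq, OfNat.ofNat_ne_zero,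
    not_false_eq_true, zero_pow, Complex.norm_div, norm_neg, Complex.norm_real, norm_eq_abs,
    div_pow, sq_abs, Nat.ofNat_nonneg, sq_sqrt, zero_add, norm_smul, mul_pow, add_zero,
    Complex.norm_ofNat]
  grind

lemma frobSq_diffOneMat (b c e : ℂ) :
    frobSq (diffOneMat b c e) =
      (4 - 2 * √2) * (‖b‖ ^ 2 + ‖c‖ ^ 2) + (5 / 2 - √2) * ‖e‖ ^ 2 := by
  simp only [frobSq, diffOneMat, neg_smul, of_apply, cons_val', cons_val_fin_one,
    Fin.sum_univ_eight, Fin.isValue, cons_val_zero, cons_val_one, cons_val, norm_zero, ne_eq,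
    OfNat.ofNat_ne_zero, not_false_eq_true, zero_pow, Complex.norm_div, Complex.norm_ofNat, div_pow,
    zero_add, norm_smul, norm_eq_abs, mul_pow, sq_abs, add_zero, norm_neg,
    Nat.ofNat_nonneg, sq_sqrt]
  grind

lemma half_frobSq_diffOneMat_le (b c e : ℂ) :
    1 / 2 * frobSq (diffOneMat b c e) ≤ (5 - 2 * √2) / 4 * frobSq (diffZeroMat b c e) := by
  rw [frobSq_diffOneMat, frobSq_diffZeroMat]
  have hgap : 0 ≤ (2 - √2) * (3 - 2 * √2) * (‖b‖ ^ 2 + ‖c‖ ^ 2) := by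
    have h₁ : 0 ≤ 2 - √2 := by linarith [sqrt_two_lt_three_halves]
    have h₂ : 0 ≤ 3 - 2 * √2 := by linarith [sqrt_two_lt_three_halves]
    positivity
  linarith

/-- With `λ = (5 − 2√2)/4` one has `λ < 1` and, for every `B ∈ M₂(ℂ)`,
`(1/2)‖B(3) − I₂ ⊗ B(2)‖₂² ≤ λ ‖B(2) − I₂ ⊗ B‖₂²`.
Here `B(3) - I₂ ⊗ B(2) = diffA 1 B' 1` and `B(2) - I₂ ⊗ B = diffA 1 B' 0`. -/
theorem stmt_3 :
    (5 - 2 * Real.sqrt 2) / 4 < 1 ∧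
      ∀ B : Matrix (Fin 2) (Fin 2) ℂ,
        (1 / 2 : ℝ) * frobSq (diffA 1 (mcast (by norm_num) B) 1) ≤
          (5 - 2 * Real.sqrt 2) / 4 * frobSq (diffA 1 (mcast (by norm_num) B) 0) := by
  refine ⟨by linarith [one_lt_sqrt_two], fun B => ?_⟩
  rw [diffA_one_one_eq, diffA_one_zero_eq, frobSq_mcast, frobSq_mcast]
  exact half_frobSq_diffOneMat_le _ _ _
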